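/- Let A ⊆ D and suppose f(X) and f(X^{∖A}) are integrable. If f(X) = f(X^{∖A}) almost surely, then f(X) = E[f(X) | σ(X_{D∖A})] almost surely. -/

import Mathlib

/-!
Write `𝒢 = σ(X_{D∖A})` and let `fₙ` be the truncation of `f` to `(-n, n]`. Conditional i.i.d.-ness
and `f(X) = f(X')` give `E[fₙ(X)² | 𝒢] = E[fₙ(X) fₙ(X') | 𝒢] = E[fₙ(X) | 𝒢]²`, so `fₙ(X)` has zero
conditional variance and equals `E[fₙ(X) | 𝒢]`. Since `fₙ(X) → f(X)` in `L¹` and conditional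
expectation is an `L¹` contraction, the identity passes to the limit.
-/

open MeasureTheory ProbabilityTheory

open Filter Topology

/-- The σ-algebra `σ(X_{D∖A})` generated by the subvector of `X` indexed by `D ∖ A`. -/
def sigmaRestrict {Ω : Type*} {d : ℕ} (X : Ω → Fin d → ℝ) (A : Finset (Fin d)) :
    MeasurableSpace Ω :=
  MeasurableSpace.comap (fun ω => (fun i : {i : Fin d // i ∈ Aᶜ} => X ω i)) inferInstance

theorem sigmaRestrict_le {Ω : Type*} [MeasurableSpace Ω] {d : ℕ} {X : Ω → Fin d → ℝ}
    (hX : Measurable X) (A : Finset (Fin d)) : sigmaRestrict X A ≤ ‹MeasurableSpace Ω› :=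
  (measurable_pi_lambda _ fun _ => (measurable_pi_apply _).comp hX).comap_le

section

variable {Ω : Type*} {m m₀ : MeasurableSpace Ω} {μ : Measure Ω}

theorem ae_eq_condExp_of_condExp_sq_ae_eq [IsFiniteMeasure μ] (hm : m ≤ m₀) {Y : Ω → ℝ}
    (hY : MemLp Y 2 μ) (hsq : μ[Y ^ 2 | m] =ᵐ[μ] μ[Y | m] ^ 2) :
    Y =ᵐ[μ] μ[Y | m] := by
  have hvar : Var[Y; μ | m] =ᵐ[μ] 0 := by
    filter_upwards [condVar_ae_eq_condExp_sq_sub_sq_condExp hm hY, hsq] with ω hvar hsq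
    simp [hvar, hsq]
  have hint : Integrable ((Y - μ[Y | m]) ^ 2) μ := (hY.sub (hY.condExp one_le_two)).integrable_sq
  have hzero : ∫ ω, ((Y - μ[Y | m]) ^ 2) ω ∂μ = 0 := by
    rw [← integral_condExp hm, ← condVar, integral_congr_ae hvar]
    simp
  filter_upwards [(integral_eq_zero_iff_of_nonneg (fun ω => sq_nonneg _) hint).mp hzero]
    with ω hω
  simpa [sub_eq_zero] using hω

theorem ae_eq_condExp_of_tendsto_eLpNorm {ι : Type*} {l : Filter ι} [l.NeBot]
    {G : ι → Ω → ℝ} {F : Ω → ℝ}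
    (hG : ∀ i, G i =ᵐ[μ] μ[G i | m]) (hGint : ∀ i, Integrable (G i) μ) (hF : Integrable F μ)
    (hlim : Tendsto (fun i => eLpNorm (F - G i) 1 μ) l (𝓝 0)) :
    F =ᵐ[μ] μ[F | m] := by
  have hbound : ∀ i, eLpNorm (F - μ[F | m]) 1 μ ≤ 2 * eLpNorm (F - G i) 1 μ := by
    intro i
    have hdecomp : F - μ[F | m] =ᵐ[μ] (F - G i) - μ[F - G i | m] := by
      filter_upwards [condExp_sub hF (hGint i) m, hG i] with ω hsub hGω
      simp only [Pi.sub_apply] at hsub hGω ⊢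
      rw [hsub, ← hGω]
      ring
    calc eLpNorm (F - μ[F | m]) 1 μ
        = eLpNorm ((F - G i) - μ[F - G i | m]) 1 μ := eLpNorm_congr_ae hdecomp
      _ ≤ eLpNorm (F - G i) 1 μ + eLpNorm (μ[F - G i | m]) 1 μ :=
          eLpNorm_sub_le (hF.sub (hGint i)).1 integrable_condExp.1 le_rfl
      _ ≤ 2 * eLpNorm (F - G i) 1 μ := by
          rw [two_mul]; gcongr; exact eLpNorm_condExp_le_eLpNorm _ le_rfl
  have hlim2 : Tendsto (fun i => 2 * eLpNorm (F - G i) 1 μ) l (𝓝 0) := by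
    simpa using ENNReal.Tendsto.const_mul hlim (Or.inr ENNReal.ofNat_ne_top)
  have hnorm : eLpNorm (F - μ[F | m]) 1 μ = 0 := le_antisymm (ge_of_tendsto' hlim2 hbound) bot_le
  filter_upwards [(eLpNorm_eq_zero_iff (hF.1.sub integrable_condExp.1) one_ne_zero).mp hnorm]
    with ω hω
  simpa [sub_eq_zero] using hω

theorem tendsto_eLpNorm_sub_truncation {F : Ω → ℝ} (hF : Integrable F μ) :
    Tendsto (fun n : ℕ => eLpNorm (F - truncation F n) 1 μ) atTop (𝓝 0) := by
  have hlim : ∀ ω, Tendsto (fun n : ℕ => truncation F n ω) atTop (𝓝 (F ω)) := fun ω =>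
    tendsto_const_nhds.congr' <| (tendsto_natCast_atTop_atTop.eventually_gt_atTop |F ω|).mono
      fun n hn => (truncation_eq_self hn).symm
  have := tendsto_lintegral_norm_of_dominated_convergence (fun _ => hF.1.truncation)
    hF.abs.2 (fun n => ae_of_all _ fun ω => abs_truncation_le_abs_self F n ω) (ae_of_all _ hlim)
  simp_rw [ofReal_norm] at this
  simpa [eLpNorm_one_eq_lintegral_enorm, enorm_sub_rev] using this

end

theorem stmt2_general
    {Ω : Type*} [MeasurableSpace Ω] (μ : Measure Ω) [IsProbabilityMeasure μ]
    {d : ℕ} (X : Ω → Fin d → ℝ) (hX : Measurable X)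
    (f : (Fin d → ℝ) → ℝ) (hf : Measurable f)
    (A : Finset (Fin d)) (X' : Ω → (Fin d → ℝ))
    -- (a) `X` and `X'` are conditionally i.i.d. given `σ(X_{D∖A})`
    (hiid : ∀ (φ φ' : (Fin d → ℝ) → ℝ),
      Measurable φ → Measurable φ' →
      (∃ C, ∀ x, |φ x| ≤ C) → (∃ C, ∀ x, |φ' x| ≤ C) →
      μ[(fun ω => φ (X ω) * φ' (X' ω)) | sigmaRestrict X A]
        =ᵐ[μ] fun ω => (μ[(fun ω => φ (X ω)) | sigmaRestrict X A]) ω *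
                        (μ[(fun ω => φ' (X ω)) | sigmaRestrict X A]) ω)
    -- integrability of `f(X)` and `f(X^{∖A})`
    (hfint : Integrable (fun ω => f (X ω)) μ)
    -- hypothesis: `f(X) = f(X^{∖A})` a.s.
    (h : (fun ω => f (X ω)) =ᵐ[μ] fun ω => f (X' ω)) :
    (fun ω => f (X ω)) =ᵐ[μ] μ[(fun ω => f (X ω)) | sigmaRestrict X A] := by
  have hfX : AEStronglyMeasurable (f ∘ X) μ := (hf.comp hX).aestronglyMeasurable
  have hfixed : ∀ n : ℕ,
      truncation (f ∘ X) n =ᵐ[μ] μ[truncation (f ∘ X) n | sigmaRestrict X A] := by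
    intro n
    have hmeas : Measurable (truncation f n) := (measurable_id.indicator measurableSet_Ioc).comp hf
    have hbdd : ∃ C, ∀ x, |truncation f n x| ≤ C := ⟨_, abs_truncation_le_bound f n⟩
    refine ae_eq_condExp_of_condExp_sq_ae_eq (sigmaRestrict_le hX A) hfX.memLp_truncation ?_
    have hswap : truncation (f ∘ X) n ^ 2
        =ᵐ[μ] fun ω => truncation f n (X ω) * truncation f n (X' ω) := by
      filter_upwards [h] with ω hω
      simp only [truncation, Function.comp_apply, Pi.pow_apply, sq] at hω ⊢
      rw [hω]
    filter_upwards [(condExp_congr_ae hswap).trans (hiid _ _ hmeas hmeas hbdd hbdd)] with ω hω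
    exact hω.trans (sq _).symm
  exact ae_eq_condExp_of_tendsto_eLpNorm hfixed (fun _ => hfX.integrable_truncation) hfint
    (tendsto_eLpNorm_sub_truncation hfint)

/-- If `f(X) = f(X^{∖A})` almost surely, then `f(X) = E[f(X) | σ(X_{D∖A})]` almost
surely.  Here `X'` plays the role of `X^{∖A}`: it agrees with `X` on the coordinates
in `D∖A` almost surely, and `X` and `X'` are conditionally i.i.d. given `σ(X_{D∖A})`
(expressed by the product formula for conditional expectations of bounded measurable
functions of `X` and `X'`). -/
theorem stmt2
    {Ω : Type*} [MeasurableSpace Ω] (μ : Measure Ω) [IsProbabilityMeasure μ]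
    {d : ℕ} (X : Ω → Fin d → ℝ) (hX : Measurable X)
    (f : (Fin d → ℝ) → ℝ) (hf : Measurable f)
    (A : Finset (Fin d)) (X' : Ω → (Fin d → ℝ)) (hX' : Measurable X')
    -- (a) `X` and `X'` are conditionally i.i.d. given `σ(X_{D∖A})`
    (hiid : ∀ (φ φ' : (Fin d → ℝ) → ℝ),
      Measurable φ → Measurable φ' →
      (∃ C, ∀ x, |φ x| ≤ C) → (∃ C, ∀ x, |φ' x| ≤ C) →
      μ[(fun ω => φ (X ω) * φ' (X' ω)) | sigmaRestrict X A]
        =ᵐ[μ] fun ω => (μ[(fun ω => φ (X ω)) | sigmaRestrict X A]) ω *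
                        (μ[(fun ω => φ' (X ω)) | sigmaRestrict X A]) ω)
    -- (b) `X'` agrees with `X` on the coordinates outside `A`, almost surely
    (hfix : ∀ᵐ ω ∂μ, ∀ i ∉ A, X' ω i = X ω i)
    -- integrability of `f(X)` and `f(X^{∖A})`
    (hfint : Integrable (fun ω => f (X ω)) μ)
    (hfint' : Integrable (fun ω => f (X' ω)) μ)
    -- hypothesis: `f(X) = f(X^{∖A})` a.s.
    (h : (fun ω => f (X ω)) =ᵐ[μ] fun ω => f (X' ω)) :
    (fun ω => f (X ω)) =ᵐ[μ] μ[(fun ω => f (X ω)) | sigmaRestrict X A] :=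
  stmt2_general μ X hX f hf A X' hiid hfint h
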